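/- For all α > 0 and x > 0, the integral over t in (0, ∞) of arctan(α t) / (t · (x² + t²)) dt equals (π / (2x²)) · log(1 + α x). -/

import Mathlib

/-!
Since `arctan (α t) / t = ∫₀^α ds / (1 + s²t²)`, Fubini turns the integral into
`∫₀^α ∫₀^∞ dt / ((1 + s²t²)(x² + t²)) ds`. By partial fractions the inner integral is
`π / (2x(1 + sx))` (for `s ≠ 1/x`, which suffices almost everywhere), and integrating this
over `s ∈ (0, α)` gives the logarithm.
-/

open Real MeasureTheory Set

lemma integrable_inv_sq_add_sq {a : ℝ} (ha : a ≠ 0) :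
    Integrable fun t : ℝ => (a ^ 2 + t ^ 2)⁻¹ := by
  refine ((integrable_inv_one_add_sq.comp_mul_left' (inv_ne_zero ha)).const_mul (a ^ 2)⁻¹).congr
    (.of_forall fun t => ?_)
  simp only [mul_pow, inv_pow, ← mul_inv]
  field_simp

lemma integral_Ioi_inv_one_add_mul_sq {c : ℝ} (hc : 0 < c) :
    ∫ t in Ioi (0 : ℝ), (1 + (c * t) ^ 2)⁻¹ = π / (2 * c) := by
  rw [integral_comp_mul_left_Ioi (fun u => (1 + u ^ 2)⁻¹) 0 hc, mul_zero,
    integral_Ioi_inv_one_add_sq, arctan_zero, smul_eq_mul]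
  field_simp
  ring

lemma integrableOn_Ioi_inv_one_add_mul_sq {c : ℝ} (hc : c ≠ 0) :
    IntegrableOn (fun t : ℝ => (1 + (c * t) ^ 2)⁻¹) (Ioi 0) :=
  (integrable_inv_one_add_sq.comp_mul_left' hc).integrableOn

lemma inv_one_add_sq_mul_one_add_sq {p q : ℝ} (hpq : p ^ 2 ≠ q ^ 2) (t : ℝ) :
    ((1 + (p * t) ^ 2) * (1 + (q * t) ^ 2))⁻¹
      = (p ^ 2 * (1 + (p * t) ^ 2)⁻¹ - q ^ 2 * (1 + (q * t) ^ 2)⁻¹) / (p ^ 2 - q ^ 2) := by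
  have : p ^ 2 - q ^ 2 ≠ 0 := sub_ne_zero.mpr hpq
  field_simp
  ring

lemma integral_Ioi_inv_one_add_sq_mul_one_add_sq {p q : ℝ} (hp : 0 < p) (hq : 0 < q)
    (hpq : p ≠ q) :
    ∫ t in Ioi (0 : ℝ), ((1 + (p * t) ^ 2) * (1 + (q * t) ^ 2))⁻¹ = π / (2 * (p + q)) := by
  have hpq' : p ^ 2 ≠ q ^ 2 := fun h => hpq ((pow_left_inj₀ hp.le hq.le two_ne_zero).mp h)
  simp_rw [inv_one_add_sq_mul_one_add_sq hpq', integral_div]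
  rw [integral_sub ((integrableOn_Ioi_inv_one_add_mul_sq hp.ne').const_mul _)
    ((integrableOn_Ioi_inv_one_add_mul_sq hq.ne').const_mul _), integral_const_mul,
    integral_const_mul, integral_Ioi_inv_one_add_mul_sq hp, integral_Ioi_inv_one_add_mul_sq hq]
  have : p - q ≠ 0 := sub_ne_zero.mpr hpq
  field_simp
  ring

lemma arctan_mul_div_eq_intervalIntegral (α : ℝ) {t : ℝ} (ht : t ≠ 0) :
    arctan (α * t) / t = ∫ s in 0..α, (1 + (s * t) ^ 2)⁻¹ := by
  rw [intervalIntegral.integral_comp_mul_right (fun u => (1 + u ^ 2)⁻¹) ht, zero_mul,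
    integral_inv_one_add_sq, arctan_zero, sub_zero, smul_eq_mul, inv_mul_eq_div]

lemma intervalIntegral_inv_one_add_mul {a c : ℝ} (hc : c ≠ 0) (h : 0 < 1 + a * c) :
    ∫ s in 0..a, (1 + s * c)⁻¹ = log (1 + a * c) / c := by
  have := intervalIntegral.integral_comp_add_mul (fun u => u⁻¹) hc 1 (a := 0) (b := a)
  simp only [mul_zero, add_zero] at this
  simp_rw [mul_comm _ c]
  rw [this, integral_inv_of_pos one_pos (by linarith [mul_comm a c]), div_one, smul_eq_mul,
    inv_mul_eq_div]

lemma integral_Ioi_inv_one_add_sq_mul_sq_add_sq {s x : ℝ} (hs : 0 < s) (hx : 0 < x)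
    (hsx : s * x ≠ 1) :
    ∫ t in Ioi (0 : ℝ), ((1 + (s * t) ^ 2) * (x ^ 2 + t ^ 2))⁻¹
      = π / (2 * x * (1 + s * x)) := by
  have hx' : x ≠ 0 := hx.ne'
  have h_scale (t : ℝ) : ((1 + (s * t) ^ 2) * (x ^ 2 + t ^ 2))⁻¹
      = (x ^ 2)⁻¹ * ((1 + (s * t) ^ 2) * (1 + (x⁻¹ * t) ^ 2))⁻¹ := by
    field_simp
  have hsx' : s ≠ x⁻¹ := fun h => hsx (by rw [h, inv_mul_cancel₀ hx'])
  simp_rw [h_scale, integral_const_mul,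
    integral_Ioi_inv_one_add_sq_mul_one_add_sq hs (inv_pos.mpr hx) hsx']
  field_simp
  ring

lemma integrable_inv_one_add_sq_mul_sq_add_sq {x : ℝ} (hx : x ≠ 0) (ν : Measure ℝ)
    [IsFiniteMeasure ν] :
    Integrable (Function.uncurry fun t s : ℝ => ((1 + (s * t) ^ 2) * (x ^ 2 + t ^ 2))⁻¹)
      ((volume.restrict (Ioi 0)).prod ν) := by
  have h_dom : Integrable (fun p : ℝ × ℝ => (x ^ 2 + p.1 ^ 2)⁻¹ * (1 : ℝ))
      ((volume.restrict (Ioi 0)).prod ν) :=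
    (integrable_inv_sq_add_sq hx).integrableOn.mul_prod (integrable_const 1)
  refine h_dom.mono' ?_ (.of_forall fun p => ?_)
  · refine Continuous.aestronglyMeasurable (Continuous.inv₀ (by fun_prop) fun p => ?_)
    positivity
  · have : 0 < x ^ 2 + p.1 ^ 2 := by positivity
    rw [Function.uncurry_apply_pair, norm_inv, norm_mul, Real.norm_of_nonneg (by positivity),
      Real.norm_of_nonneg this.le, mul_one]
    exact inv_anti₀ this (le_mul_of_one_le_left this.le (by nlinarith))

theorem arctan_integral (α x : ℝ) (hα : 0 < α) (hx : 0 < x) :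
    ∫ t in Set.Ioi (0:ℝ), Real.arctan (α * t) / (t * (x ^ 2 + t ^ 2))
      = (Real.pi / (2 * x ^ 2)) * Real.log (1 + α * x) := by
  set f : ℝ → ℝ → ℝ := fun t s => ((1 + (s * t) ^ 2) * (x ^ 2 + t ^ 2))⁻¹
  calc _ = ∫ t in Ioi 0, ∫ s in Ioc 0 α, f t s := by
        refine setIntegral_congr_fun measurableSet_Ioi fun t ht => ?_
        rw [← div_div, arctan_mul_div_eq_intervalIntegral α (ne_of_gt ht),
          intervalIntegral.integral_of_le hα.le, ← integral_div]
        simp only [f, mul_inv, div_eq_mul_inv]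
    _ = ∫ s in Ioc 0 α, ∫ t in Ioi 0, f t s :=
        integral_integral_swap (integrable_inv_one_add_sq_mul_sq_add_sq hx.ne' _)
    _ = ∫ s in Ioc 0 α, π / (2 * x) * (1 + s * x)⁻¹ := by
        refine setIntegral_congr_ae measurableSet_Ioc ?_
        filter_upwards [compl_mem_ae_iff.mpr (measure_singleton x⁻¹)] with s hs hs_pos
        rw [integral_Ioi_inv_one_add_sq_mul_sq_add_sq hs_pos.1 hx]
        · field_simp
        · exact fun h => hs (eq_inv_of_mul_eq_one_left h)
    _ = _ := by
        rw [← intervalIntegral.integral_of_le hα.le, intervalIntegral.integral_const_mul,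
          intervalIntegral_inv_one_add_mul hx.ne' (by positivity)]
        field_simp
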